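/- arXiv:1312.5509 — 5 statements merged into one kernel-verified Lean document; each statement's English description precedes it below -/
import Mathlib

section
/- Let R be a noetherian integral domain that is not a field. Then Hom_R(K, R) = 0, where K is the field of fractions of R. -/
/-!
If `t` is a nonzero nonunit of `R`, every element of `K` is divisible by every power of `t`, so
`f x` is divisible in `R` by all `t ^ n`. In a noetherian domain divisibility is well founded, so
no nonzero element has this property.
-/

theorem eq_zero_of_forall_pow_dvd {α : Type*} [CommMonoidWithZero α] [IsCancelMulZero α]
    [WfDvdMonoid α] {a b : α} (ha : ¬IsUnit a) (h : ∀ n : ℕ, a ^ n ∣ b) : b = 0 := by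
  by_contra hb
  obtain ⟨n, hn⟩ := FiniteMultiplicity.of_not_isUnit ha hb
  exact hn (h (n + 1))

theorem LinearMap.eq_zero_of_forall_exists_pow_smul_eq {R M : Type*} [CommSemiring R]
    [IsCancelMulZero R] [WfDvdMonoid R] [AddCommMonoid M] [Module R M] {t : R} (ht : ¬IsUnit t)
    (hdiv : ∀ (m : M) (n : ℕ), ∃ y, t ^ n • y = m) (f : M →ₗ[R] R) : f = 0 := by
  ext m
  refine eq_zero_of_forall_pow_dvd ht fun n => ?_
  obtain ⟨y, rfl⟩ := hdiv m n
  exact ⟨f y, by rw [map_smul, smul_eq_mul]⟩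

theorem IsFractionRing.smul_div_algebraMap {R K : Type*} [CommRing R] [IsDomain R] [Field K]
    [Algebra R K] [IsFractionRing R K] {s : R} (hs : s ≠ 0) (x : K) :
    s • (x / algebraMap R K s) = x := by
  rw [Algebra.smul_def, mul_div_cancel₀]
  exact (map_ne_zero_iff _ (IsFractionRing.injective R K)).mpr hs

theorem hom_fractionField_eq_zero
    (R : Type*) [CommRing R] [IsDomain R] [IsNoetherianRing R] (hR : ¬ IsField R)
    (f : FractionRing R →ₗ[R] R) : f = 0 := by
  obtain ⟨t, ht0, htu⟩ := Ring.exists_not_isUnit_of_not_isField hR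
  exact f.eq_zero_of_forall_exists_pow_smul_eq htu fun x n =>
    ⟨_, IsFractionRing.smul_div_algebraMap (pow_ne_zero n ht0) x⟩
end

section
/- Let R be a noetherian integral domain that is not a field. Then the adic completion lim_{s ∈ R\{0}} R/sR is uncountable. -/
open Ideal CategoryTheory

/-- Compatibility with the transition maps `R/tR → R/sR` (for `s ∣ t`) of the inverse system
indexed by the nonzero elements of `R` preordered by divisibility. -/
def AdicCompat (R : Type) [CommRing R] (g : ∀ s : R, R ⧸ Ideal.span {s}) : Prop :=
  ∀ s t : R, s ≠ 0 → t ≠ 0 → ∀ h : s ∣ t,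
    Ideal.Quotient.factor
      (Ideal.span_singleton_le_span_singleton.mpr h) (g t) = g s

/-- The adic completion `lim_{s ∈ R \ {0}} R/sR`, as a submodule of the product. -/
def adicCompl (R : Type) [CommRing R] : Submodule R (∀ s : R, R ⧸ Ideal.span {s}) where
  carrier := {g | AdicCompat R g}
  zero_mem' := fun s t hs ht h => by simp
  add_mem' := fun {a b} ha hb s t hs ht h => by
    simp only [Pi.add_apply, map_add, ha s t hs ht h, hb s t hs ht h]
  smul_mem' := fun r g hg s t hs ht h => by
    have h2 := hg s t hs ht h
    obtain ⟨x, hx⟩ := Ideal.Quotient.mk_surjective (g t)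
    rw [Pi.smul_apply, Pi.smul_apply, ← h2, ← hx]
    rw [show r • Ideal.Quotient.mk (Ideal.span {t}) x = Ideal.Quotient.mk _ (r * x) from rfl,
      Ideal.Quotient.factor_mk, Ideal.Quotient.factor_mk]
    rfl

/-- The canonical diagonal map `R → lim_{s} R/sR`. -/
def adicDiag (R : Type) [CommRing R] : R →ₗ[R] adicCompl R where
  toFun a := ⟨fun _ => Ideal.Quotient.mk _ a, fun _ _ _ _ _ => Ideal.Quotient.factor_mk _ a⟩
  map_add' a b := by apply Subtype.ext; funext s; exact map_add _ a b
  map_smul' r a := rfl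

/-- `Ext^1_R(K, R)` where `K` is the fraction field of `R`. -/
noncomputable def ext1 (R : Type) [CommRing R] [IsDomain R] : ModuleCat R :=
  ((Ext R (ModuleCat R) 1).obj (Opposite.op (ModuleCat.of R (FractionRing R)))).obj
    (ModuleCat.of R R)

/-!
Fix a nonzero nonunit `r`, so that `a * r ∤ a` for every `a ≠ 0`.

If `R` is uncountable, this already makes the diagonal map `R → lim R/sR` injective.

If `R` is countable, enumerate its nonzero elements as `v 0, v 1, …`. The products
`t n = ∏_{k<n} r v k` form a chain `t 0 ∣ t 1 ∣ ⋯` that is strict, since `t (n+1) = t n * (r v n)`,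
and cofinal, since `v k ∣ t (k+1)`. For `ε ⊆ ℕ` the partial sums of `∑_{k ∈ ε} t k` are then
Cauchy for the chain and define a point of the completion. Two such points agree modulo every
`t n` only if `ε = ε'`: at the first index `k` where they differ, `t (k+1)` would divide `± t k`.
-/

instance : Uncountable (Set ℕ) :=
  ⟨fun ⟨f, hf⟩ => Function.cantor_injective f hf⟩

theorem not_mul_dvd_self {M : Type*} [CommMonoidWithZero M] [IsLeftCancelMulZero M] {a b : M}
    (ha : a ≠ 0) (hb : ¬IsUnit b) : ¬a * b ∣ a := fun h =>
  hb (isUnit_of_dvd_one ((mul_dvd_mul_iff_left ha).mp (by rwa [mul_one])))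

theorem eq_zero_of_forall_ne_zero_dvd {R : Type*} [CommRing R] [IsDomain R] (hR : ¬IsField R)
    {a : R} (h : ∀ s ≠ 0, s ∣ a) : a = 0 := by
  obtain ⟨r, hr0, hr⟩ := Ring.exists_not_isUnit_of_not_isField hR
  by_contra ha
  exact not_mul_dvd_self ha hr (h _ (mul_ne_zero ha hr0))

theorem adicDiag_injective {R : Type} [CommRing R] [IsDomain R] (hR : ¬IsField R) :
    Function.Injective (adicDiag R) := by
  refine (injective_iff_map_eq_zero (adicDiag R)).mpr fun a ha =>
    eq_zero_of_forall_ne_zero_dvd hR fun s _ => ?_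
  have hs : Ideal.Quotient.mk (Ideal.span {s}) a = 0 := congrFun (congrArg Subtype.val ha) s
  exact Ideal.mem_span_singleton.mp (Ideal.Quotient.eq_zero_iff_mem.mp hs)

section DvdChain

variable {R : Type} [CommRing R]

structure IsCofinalDvdChain (t : ℕ → R) : Prop where
  dvd_succ (n : ℕ) : t n ∣ t (n + 1)
  not_succ_dvd (n : ℕ) : ¬t (n + 1) ∣ t n
  exists_dvd (s : R) : s ≠ 0 → ∃ n, s ∣ t n

theorem exists_isCofinalDvdChain [IsDomain R] [Countable R] (hR : ¬IsField R) :
    ∃ t : ℕ → R, IsCofinalDvdChain t := by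
  obtain ⟨r, hr0, hr⟩ := Ring.exists_not_isUnit_of_not_isField hR
  have : Nonempty {x : R // x ≠ 0} := ⟨⟨1, one_ne_zero⟩⟩
  obtain ⟨v, hv⟩ := exists_surjective_nat {x : R // x ≠ 0}
  have hprod (n : ℕ) : ∏ k ∈ Finset.range n, r * v k ≠ 0 :=
    Finset.prod_ne_zero_iff.mpr fun k _ => mul_ne_zero hr0 (v k).2
  refine ⟨fun n => ∏ k ∈ Finset.range n, r * v k, fun n => ?_, fun n => ?_, fun s hs => ?_⟩
  · rw [Finset.prod_range_succ]
    exact dvd_mul_right _ _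
  · rw [Finset.prod_range_succ]
    exact not_mul_dvd_self (hprod n) fun hu => hr (isUnit_of_mul_isUnit_left hu)
  · obtain ⟨k, hk⟩ := hv ⟨s, hs⟩
    have hsk : s ∣ r * v k := by
      rw [hk]
      exact dvd_mul_left s r
    exact ⟨k + 1, hsk.trans (Finset.dvd_prod_of_mem _ (Finset.mem_range.mpr k.lt_succ_self))⟩

def IsDvdCauchy (t a : ℕ → R) : Prop :=
  ∀ n m, n ≤ m → t n ∣ a m - a n

/-- At `s`, the sequence `a` is read at some index `n` with `s ∣ t n`, an arbitrary one if there
is none. -/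
noncomputable def seqLimit (t a : ℕ → R) (s : R) : R ⧸ Ideal.span {s} :=
  Ideal.Quotient.mk _ (a (Classical.epsilon fun n => s ∣ t n))

variable {t a b : ℕ → R}

theorem seqLimit_eq_mk (ha : IsDvdCauchy t a) {s : R} {n : ℕ} (hs : s ∣ t n) :
    seqLimit t a s = Ideal.Quotient.mk _ (a n) := by
  set N := Classical.epsilon fun n => s ∣ t n
  have hN : s ∣ t N := Classical.epsilon_spec (p := fun n => s ∣ t n) ⟨n, hs⟩
  rw [seqLimit, Ideal.Quotient.eq, Ideal.mem_span_singleton]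
  have h₁ := hs.trans (ha n (max n N) (le_max_left _ _))
  have h₂ := hN.trans (ha N (max n N) (le_max_right _ _))
  simpa only [sub_sub_sub_cancel_left] using dvd_sub h₁ h₂

theorem seqLimit_mem_adicCompl (ht : ∀ s : R, s ≠ 0 → ∃ n, s ∣ t n)
    (ha : IsDvdCauchy t a) : seqLimit t a ∈ adicCompl R := by
  intro s u _ hu hsu
  obtain ⟨n, hn⟩ := ht u hu
  rw [seqLimit_eq_mk ha hn, Ideal.Quotient.factor_mk, seqLimit_eq_mk ha (hsu.trans hn)]

theorem dvd_sub_of_seqLimit_eq (ha : IsDvdCauchy t a) (hb : IsDvdCauchy t b)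
    (h : seqLimit t a = seqLimit t b) (n : ℕ) :
    t n ∣ a n - b n := by
  have hn := congrFun h (t n)
  rw [seqLimit_eq_mk ha dvd_rfl, seqLimit_eq_mk hb dvd_rfl] at hn
  exact Ideal.mem_span_singleton.mp (Ideal.Quotient.eq.mp hn)

noncomputable def partialSum (t : ℕ → R) (ε : Set ℕ) (n : ℕ) : R :=
  ∑ k ∈ Finset.range n, ε.indicator t k

theorem partialSum_succ (t : ℕ → R) (ε : Set ℕ) (n : ℕ) :
    partialSum t ε (n + 1) = partialSum t ε n + ε.indicator t n :=
  Finset.sum_range_succ _ _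

theorem isDvdCauchy_partialSum (ht : ∀ n, t n ∣ t (n + 1)) (ε : Set ℕ) :
    IsDvdCauchy t (partialSum t ε) := by
  intro n m hnm
  rw [partialSum, partialSum, ← Finset.sum_Ico_eq_sub _ hnm]
  refine Finset.dvd_sum fun k hk => ?_
  have htk : t n ∣ t k :=
    Nat.le_induction dvd_rfl (fun m _ ih => ih.trans (ht m)) k (Finset.mem_Ico.mp hk).1
  by_cases hkε : k ∈ ε
  · rw [Set.indicator_of_mem hkε]
    exact htk
  · rw [Set.indicator_of_notMem hkε]
    exact dvd_zero _

theorem mem_iff_mem_of_dvd_indicator_sub {n : ℕ} (ht : ¬t (n + 1) ∣ t n) {ε ε' : Set ℕ}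
    (h : t (n + 1) ∣ ε.indicator t n - ε'.indicator t n) : n ∈ ε ↔ n ∈ ε' := by
  by_cases h₁ : n ∈ ε <;> by_cases h₂ : n ∈ ε' <;> simp_all

theorem eq_of_forall_dvd_partialSum_sub (ht : ∀ n, ¬t (n + 1) ∣ t n) {ε ε' : Set ℕ}
    (h : ∀ n, t n ∣ partialSum t ε n - partialSum t ε' n) : ε = ε' := by
  classical
  have hmem (n : ℕ) (hn : partialSum t ε n = partialSum t ε' n) : n ∈ ε ↔ n ∈ ε' :=
    mem_iff_mem_of_dvd_indicator_sub (ht n) <| by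
      simpa only [partialSum_succ, hn, add_sub_add_left_eq_sub] using h (n + 1)
  have hsum (n : ℕ) : partialSum t ε n = partialSum t ε' n := by
    induction n with
    | zero => simp [partialSum]
    | succ n ih => simp only [partialSum_succ, ih, Set.indicator_apply, hmem n ih]
  exact Set.ext fun n => hmem n (hsum n)

theorem IsCofinalDvdChain.uncountable_adicCompl (ht : IsCofinalDvdChain t) :
    Uncountable (adicCompl R) := by
  have hsum := isDvdCauchy_partialSum ht.dvd_succ
  let f (ε : Set ℕ) : adicCompl R :=
    ⟨seqLimit t (partialSum t ε), seqLimit_mem_adicCompl ht.exists_dvd (hsum ε)⟩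
  refine Function.Injective.uncountable (f := f) fun ε ε' hf => ?_
  exact eq_of_forall_dvd_partialSum_sub ht.not_succ_dvd
    (dvd_sub_of_seqLimit_eq (hsum ε) (hsum ε') (congrArg Subtype.val hf))

end DvdChain

theorem adicCompletion_uncountable_general
    (R : Type) [CommRing R] [IsDomain R] (hR : ¬ IsField R) :
    Uncountable (adicCompl R) := by
  by_cases hc : Countable R
  · obtain ⟨t, ht⟩ := exists_isCofinalDvdChain hR
    exact ht.uncountable_adicCompl
  · have : Uncountable R := not_countable_iff.mp hc
    exact (adicDiag_injective hR).uncountable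

theorem adicCompletion_uncountable
    (R : Type) [CommRing R] [IsDomain R] [IsNoetherianRing R] (hR : ¬ IsField R) :
    Uncountable (adicCompl R) :=
  adicCompletion_uncountable_general R hR
end

section
/- Let R be a UFD, t a prime element of R, and P a submonoid of R \ {0} such that some p ∈ P generates together with t a proper ideal (t,p)R ⊂ R. Then the intersection over p ∈ P of the images of multiplication-by-p maps on R/tR is zero. -/
/-!
An element of `R ⧸ tR` lying in every `p • (R ⧸ tR)`, `p ∈ P`, is in particular divisible by every
power of the class of one fixed `p` with `(t, p) ≠ R`. That class is a non-unit of the noetherian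
domain `R ⧸ tR`, so Krull's intersection theorem leaves only `0`.
-/

theorem Ideal.Quotient.span_singleton_mk_ne_top {R : Type*} [CommRing R] {I : Ideal R} {p : R}
    (h : I ⊔ Ideal.span {p} ≠ ⊤) : Ideal.span {Ideal.Quotient.mk I p} ≠ ⊤ := by
  intro htop
  apply h
  rw [← Set.image_singleton, ← Ideal.map_span] at htop
  have hcomap := congrArg (Ideal.comap (Ideal.Quotient.mk I)) htop
  rwa [Ideal.comap_map_of_surjective _ Ideal.Quotient.mk_surjective, ← RingHom.ker_eq_comap_bot,
    Ideal.mk_ker, Ideal.comap_top, sup_comm] at hcomap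

theorem iInf_range_mulLeft_pow_eq_bot {R S : Type*} [CommSemiring R] [CommRing S] [IsDomain S]
    [IsNoetherianRing S] [Algebra R S] {q : S} (hq : Ideal.span {q} ≠ ⊤) :
    ⨅ n : ℕ, LinearMap.range (LinearMap.mulLeft R (q ^ n)) = ⊥ := by
  have hrange (n : ℕ) : LinearMap.range (LinearMap.mulLeft R (q ^ n)) =
      ((Ideal.span {q}) ^ n).restrictScalars R := by
    ext x
    simp [Ideal.span_singleton_pow, Ideal.mem_span_singleton', mul_comm]
  simp_rw [hrange, ← Submodule.restrictScalars_iInf, Ideal.iInf_pow_eq_bot_of_isDomain _ hq,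
    Submodule.restrictScalars_bot]

theorem iInf_range_mul_eq_bot_general
    (R : Type*) [CommRing R] [IsNoetherianRing R]
    (t : R) (ht : Prime t) (P : Submonoid R)
    (hp : ∃ p ∈ P, Ideal.span {t, p} ≠ ⊤) :
    (⨅ p ∈ P,
      LinearMap.range (LinearMap.mulLeft R (Ideal.Quotient.mk (Ideal.span {t}) p))) = ⊥ := by
  obtain ⟨p, hpP, htp⟩ := hp
  have : (Ideal.span {t}).IsPrime := Ideal.isPrime_span_singleton_of_prime ht
  rw [Ideal.span_insert] at htp
  refine eq_bot_iff.2 (le_trans ?_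
    (iInf_range_mulLeft_pow_eq_bot (Ideal.Quotient.span_singleton_mk_ne_top htp)).le)
  refine le_iInf fun n => ?_
  rw [← map_pow]
  exact iInf₂_le (p ^ n) (pow_mem hpP n)

theorem iInf_range_mul_eq_bot
    (R : Type*) [CommRing R] [IsDomain R] [IsNoetherianRing R] [UniqueFactorizationMonoid R]
    (t : R) (ht : Prime t) (P : Submonoid R) (hP0 : (0 : R) ∉ P)
    (hp : ∃ p ∈ P, Ideal.span {t, p} ≠ ⊤) :
    (⨅ p ∈ P,
      LinearMap.range (LinearMap.mulLeft R (Ideal.Quotient.mk (Ideal.span {t}) p))) = ⊥ :=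
  iInf_range_mul_eq_bot_general R t ht P hp
end

section
/- Let R' be a free module over a commutative ring R, and let (V_s) be an inverse system of R-modules indexed by a directed preorder. Then the canonical map R' ⊗_R lim V_s → lim (R' ⊗_R V_s) is injective. -/
/-- The inverse limit of an inverse system `(V s)` of `R`-modules over a preorder `ι`,
with transition maps `T h : V t →ₗ[R] V s` for `h : s ≤ t`, as a submodule of the product. -/
def invLimit (R : Type*) [CommRing R] {ι : Type*} [Preorder ι]
    (V : ι → Type*) [∀ s, AddCommGroup (V s)] [∀ s, Module R (V s)]
    (T : ∀ {s t : ι}, s ≤ t → (V t →ₗ[R] V s)) : Submodule R (∀ s, V s) where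
  carrier := {f | ∀ (s t : ι) (h : s ≤ t), T h (f t) = f s}
  zero_mem' := fun s t h => by simp
  add_mem' := fun {a b} ha hb s t h => by simp [ha s t h, hb s t h]
  smul_mem' := fun r f hf s t h => by simp [hf s t h]

open TensorProduct

section

variable {R : Type*} [CommSemiring R] {R' : Type*} [AddCommMonoid R'] [Module R R']
  {M : Type*} [AddCommMonoid M] [Module R M]

theorem TensorProduct.equivFinsuppOfBasisLeft_lTensor {κ : Type*} [DecidableEq κ]
    (b : Module.Basis κ R R') {N : Type*} [AddCommMonoid N] [Module R N]
    (f : M →ₗ[R] N) (z : R' ⊗[R] M) :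
    equivFinsuppOfBasisLeft b (f.lTensor R' z) =
      Finsupp.mapRange f f.map_zero (equivFinsuppOfBasisLeft b z) := by
  induction z with
  | zero => simp
  | tmul x m => ext k; simp
  | add x y hx hy => simp only [map_add, hx, hy, Finsupp.mapRange_add f.map_add]

/-- Over a free module `R' ≅ ⊕ R`, tensoring is taking coordinates in `M`, so a jointly injective
family of maps stays jointly injective after `R' ⊗ -`, even for infinitely many maps. -/
theorem LinearMap.pi_lTensor_injective [Module.Free R R'] {ι : Type*}
    {N : ι → Type*} [∀ s, AddCommMonoid (N s)] [∀ s, Module R (N s)]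
    (f : ∀ s, M →ₗ[R] N s) (hf : Function.Injective (LinearMap.pi f)) :
    Function.Injective (LinearMap.pi fun s => (f s).lTensor R') := by
  classical
  let b := Module.Free.chooseBasis R R'
  intro z₁ z₂ h
  apply (equivFinsuppOfBasisLeft b).injective
  ext k
  apply hf
  funext s
  have hs := congrArg (fun z => equivFinsuppOfBasisLeft b z k) (congrFun h s)
  simpa only [LinearMap.pi_apply, equivFinsuppOfBasisLeft_lTensor, Finsupp.mapRange_apply] using hs

end

theorem tensor_invLimit_injective_general
    (R : Type*) [CommRing R]
    (R' : Type*) [AddCommGroup R'] [Module R R'] [Module.Free R R']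
    (ι : Type*) [Preorder ι]
    (V : ι → Type*) [∀ s, AddCommGroup (V s)] [∀ s, Module R (V s)]
    (T : ∀ {s t : ι}, s ≤ t → (V t →ₗ[R] V s)) :
    Function.Injective
      (LinearMap.pi fun s : ι =>
        LinearMap.lTensor R' ((LinearMap.proj s).comp (invLimit R V @T).subtype)) :=
  LinearMap.pi_lTensor_injective _ fun _ _ h => Subtype.ext (funext fun s => congrFun h s)

theorem tensor_invLimit_injective
    (R : Type*) [CommRing R]
    (R' : Type*) [AddCommGroup R'] [Module R R'] [Module.Free R R']
    (ι : Type*) [Preorder ι] [IsDirected ι (· ≤ ·)]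
    (V : ι → Type*) [∀ s, AddCommGroup (V s)] [∀ s, Module R (V s)]
    (T : ∀ {s t : ι}, s ≤ t → (V t →ₗ[R] V s))
    (hT_id : ∀ s : ι, T (le_refl s) = LinearMap.id)
    (hT_comp : ∀ {s t u : ι} (h1 : s ≤ t) (h2 : t ≤ u),
      (T h1).comp (T h2) = T (h1.trans h2)) :
    Function.Injective
      (LinearMap.pi fun s : ι =>
        LinearMap.lTensor R' ((LinearMap.proj s).comp (invLimit R V @T).subtype)) :=
  tensor_invLimit_injective_general R R' ι V T
end

section
/- Let k be an algebraically closed field, R = k[X_1, X_2], and t an irreducible polynomial not in the maximal ideal (X_1, X_2). Then there exists a point α = (α_1, α_2) ≠ (0,0) with t(α) = 0, and the linear form p = α_2 X_1 − α_1 X_2 is irreducible, lies in (X_1, X_2), and (t, p)R is a proper ideal (both lie in the maximal ideal (X_1 − α_1, X_2 − α_2)). -/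
/-!
A zero `α` of `t` exists by the Nullstellensatz, since `t` is not a unit; it is not the origin
because `t ∉ (X₀, X₁)`. The linear form `α₁X₀ - α₀X₁` has total degree one, hence is
irreducible, and it vanishes at `α`, so both it and `t` lie in the maximal ideal
`(X₀ - α₀, X₁ - α₁)`, the kernel of evaluation at `α`.
-/

open MvPolynomial

namespace MvPolynomial

variable {σ R K : Type*}

theorem span_range_X_sub_C_eq_ker_eval [CommRing R] (α : σ → R) :
    Ideal.span (Set.range fun i => X i - C (α i)) = RingHom.ker (eval α) := by
  set I := Ideal.span (Set.range fun i => (X i - C (α i) : MvPolynomial σ R))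
  refine le_antisymm (Ideal.span_le.mpr ?_) fun p hp => ?_
  · rintro _ ⟨i, rfl⟩
    simp
  · -- modulo `I` every `X i` is the constant `α i`, so the quotient map factors through `eval α`
    have hmk : Ideal.Quotient.mk I = (Ideal.Quotient.mk I).comp (C.comp (eval α)) := by
      refine ringHom_ext (fun r => by simp) fun i => ?_
      simpa [Ideal.Quotient.eq] using (Ideal.subset_span ⟨i, rfl⟩ : X i - C (α i) ∈ I)
    rw [RingHom.mem_ker] at hp
    rw [← Ideal.Quotient.eq_zero_iff_mem, hmk]
    simp [hp]

theorem span_X_sub_C_pair_eq_ker_eval [CommRing R] (α : Fin 2 → R) :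
    Ideal.span {(X 0 - C (α 0) : MvPolynomial (Fin 2) R), X 1 - C (α 1)} =
      RingHom.ker (eval α) := by
  rw [← span_range_X_sub_C_eq_ker_eval]
  congr 1
  ext
  simp [Fin.exists_fin_two, eq_comm]

theorem isMaximal_ker_eval [Field K] (α : σ → K) : (RingHom.ker (eval α)).IsMaximal :=
  RingHom.ker_isMaximal_of_surjective _ fun a => ⟨C a, eval_C a⟩

theorem exists_eval_eq_zero_of_not_isUnit [Field K] [IsAlgClosed K] [Finite σ]
    {p : MvPolynomial σ K} (hp : ¬IsUnit p) : ∃ x : σ → K, eval x p = 0 := by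
  obtain ⟨M, hM, hpM⟩ := Ideal.exists_le_maximal _ (Ideal.span_singleton_ne_top hp)
  obtain ⟨x, rfl⟩ := eq_vanishingIdeal_singleton_of_isMaximal K hM
  exact ⟨x, (mem_vanishingIdeal_singleton_iff x p).mp (hpM (Ideal.mem_span_singleton_self p))⟩

theorem irreducible_of_totalDegree_eq_one_of_field [Field K] {p : MvPolynomial σ K}
    (hp : p.totalDegree = 1) : Irreducible p := by
  obtain ⟨d, hd⟩ : ∃ d, p.coeff d ≠ 0 := ne_zero_iff.mp (by rintro rfl; simp at hp)
  exact irreducible_of_totalDegree_eq_one hp fun x hx =>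
    isUnit_iff_ne_zero.mpr (ne_zero_of_dvd_ne_zero hd (hx d))

theorem totalDegree_C_mul_X_sub_C_mul_X [Field K] {α : Fin 2 → K} (hα : α ≠ 0) :
    (C (α 1) * X 0 - C (α 0) * X 1 : MvPolynomial (Fin 2) K).totalDegree = 1 := by
  refine le_antisymm ?_ (Nat.one_le_iff_ne_zero.mpr fun h => hα ?_)
  · refine (totalDegree_sub _ _).trans (max_le ?_ ?_) <;>
      exact (totalDegree_mul _ _).trans (by simp)
  · have hc := totalDegree_eq_zero_iff_eq_C.mp h
    have h0 := congr_arg (coeff (Finsupp.single 0 1)) hc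
    have h1 := congr_arg (coeff (Finsupp.single 1 1)) hc
    simp [coeff_X, Finsupp.single_eq_single_iff] at h0 h1
    ext i
    fin_cases i <;> simp [h0, h1]

end MvPolynomial

theorem exists_zero_and_linear_form
    (k : Type*) [Field k] [IsAlgClosed k]
    (t : MvPolynomial (Fin 2) k) (hirr : Irreducible t)
    (ht : t ∉ Ideal.span {(X 0 : MvPolynomial (Fin 2) k), X 1}) :
    ∃ α : Fin 2 → k, α ≠ 0 ∧ eval α t = 0 ∧
      (Irreducible (C (α 1) * X 0 - C (α 0) * X 1 : MvPolynomial (Fin 2) k) ∧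
       (C (α 1) * X 0 - C (α 0) * X 1 : MvPolynomial (Fin 2) k) ∈
          Ideal.span {(X 0 : MvPolynomial (Fin 2) k), X 1} ∧
       Ideal.span {t, C (α 1) * X 0 - C (α 0) * X 1} ≠ ⊤ ∧
       t ∈ Ideal.span {(X 0 - C (α 0) : MvPolynomial (Fin 2) k), X 1 - C (α 1)} ∧
       (C (α 1) * X 0 - C (α 0) * X 1 : MvPolynomial (Fin 2) k) ∈
          Ideal.span {(X 0 - C (α 0) : MvPolynomial (Fin 2) k), X 1 - C (α 1)} ∧
       (Ideal.span {(X 0 - C (α 0) : MvPolynomial (Fin 2) k), X 1 - C (α 1)}).IsMaximal) := by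
  obtain ⟨α, hα⟩ := exists_eval_eq_zero_of_not_isUnit hirr.not_isUnit
  have hM := span_X_sub_C_pair_eq_ker_eval α
  have htM : t ∈ RingHom.ker (eval α) := hα
  have hα0 : α ≠ 0 := by
    rintro rfl
    rw [← hM] at htM
    simp only [Pi.zero_apply, C_0, sub_zero] at htM
    exact ht htM
  have hpM : (C (α 1) * X 0 - C (α 0) * X 1 : MvPolynomial (Fin 2) k) ∈
      RingHom.ker (eval α) := by
    simp [mul_comm]
  have hmax := isMaximal_ker_eval α
  refine ⟨α, hα0, hα, irreducible_of_totalDegree_eq_one_of_field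
    (totalDegree_C_mul_X_sub_C_mul_X hα0), ?_, ?_, hM ▸ htM, hM ▸ hpM, hM ▸ hmax⟩
  · exact Ideal.mem_span_pair.mpr ⟨C (α 1), -C (α 0), by ring⟩
  · exact ne_top_of_le_ne_top hmax.ne_top (Ideal.span_le.mpr (Set.pair_subset htM hpM))
end
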